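/- Let V be a finite vertex set, let N : V → Finset V assign to each node its neighborhood, let α : V → V → ℝ be aggregation weights, let h : V → EuclideanSpace ℝ (Fin F) be the previous-layer representations, and let σ : ℝ → ℝ satisfy |σ(x) − σ(y)| ≤ |x − y| for all x, y. Define ĥᵢ = Σ_{k ∈ N(i) ∪ {i}} α i k • h k and let hᵢ′ be obtained by applying σ entrywise to ĥᵢ. Fix nodes i, j with i ∉ N(i), j ∉ N(j), i ∉ N(j), j ∉ N(i). Assume that all neighbors are common, i.e. N(i) = N(j), and that the structure weights agree on common neighbors, i.e. α i c = α j c for every c ∈ N(i). Then ‖hᵢ′ − hⱼ′‖ ≤ ‖α i i • h i − α j j • h j‖ in the Euclidean (ℓ²) norm. -/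

import Mathlib

/-! The weights of `i` and `j` agree on their common neighbourhood, so the common-neighbour terms
cancel in `ĥᵢ - ĥⱼ`, leaving `α i i • h i - α j j • h j`. Applying the 1-Lipschitz `σ` entrywise
shrinks every coordinate of the difference, hence its ℓ² norm. -/

theorem Finset.sum_union_singleton_sub_sum_union_singleton {V M : Type*} [DecidableEq V]
    [AddCommGroup M] {s : Finset V} {i j : V} (hi : i ∉ s) (hj : j ∉ s) {f g : V → M}
    (hfg : ∀ c ∈ s, f c = g c) :
    ∑ k ∈ s ∪ {i}, f k - ∑ k ∈ s ∪ {j}, g k = f i - g j := by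
  rw [sum_union (disjoint_singleton_right.mpr hi), sum_union (disjoint_singleton_right.mpr hj),
    sum_congr rfl hfg, sum_singleton, sum_singleton, add_sub_add_left_eq_sub]

theorem PiLp.norm_le_norm_of_forall_norm_le {p : ENNReal} [Fact (1 ≤ p)] {ι : Type*} [Fintype ι]
    {β : ι → Type*} [∀ i, SeminormedAddCommGroup (β i)] {x y : PiLp p β}
    (hxy : ∀ i, ‖x i‖ ≤ ‖y i‖) : ‖x‖ ≤ ‖y‖ := by
  rcases p.dichotomy with rfl | hp
  · rw [norm_eq_ciSup, norm_eq_ciSup]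
    exact ciSup_mono (Set.finite_range _).bddAbove hxy
  · have hp_pos : 0 < p.toReal := by linarith
    rw [norm_eq_sum hp_pos, norm_eq_sum hp_pos]
    gcongr with i
    exact hxy i

theorem gnn_common_neighbors_feature_smoothness_general
    {V : Type*} [DecidableEq V] {F : ℕ}
    (N : V → Finset V) (α : V → V → ℝ)
    (h : V → EuclideanSpace ℝ (Fin F))
    (σ : ℝ → ℝ) (hσ : ∀ x y : ℝ, |σ x - σ y| ≤ |x - y|)
    (hhat : V → EuclideanSpace ℝ (Fin F))
    (hdef : ∀ i, hhat i = ∑ k ∈ N i ∪ {i}, α i k • h k)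
    (h' : V → EuclideanSpace ℝ (Fin F))
    (hh' : ∀ i, h' i = fun f => σ (hhat i f))
    (i j : V) (hii : i ∉ N i) (hji : j ∉ N i)
    (hN : N i = N j) (hα : ∀ c ∈ N i, α i c = α j c) :
    ‖h' i - h' j‖ ≤ ‖α i i • h i - α j j • h j‖ := by
  have hcancel : hhat i - hhat j = α i i • h i - α j j • h j := by
    rw [hdef i, hdef j, ← hN]
    exact Finset.sum_union_singleton_sub_sum_union_singleton hii hji fun c hc => by rw [hα c hc]
  calc ‖h' i - h' j‖ ≤ ‖hhat i - hhat j‖ := PiLp.norm_le_norm_of_forall_norm_le fun f => by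
        simpa only [PiLp.sub_apply, hh', Real.norm_eq_abs] using hσ (hhat i f) (hhat j f)
    _ = ‖α i i • h i - α j j • h j‖ := by rw [hcancel]

theorem gnn_common_neighbors_feature_smoothness
    {V : Type*} [Fintype V] [DecidableEq V] {F : ℕ}
    (N : V → Finset V) (α : V → V → ℝ)
    (h : V → EuclideanSpace ℝ (Fin F))
    (σ : ℝ → ℝ) (hσ : ∀ x y : ℝ, |σ x - σ y| ≤ |x - y|)
    (hhat : V → EuclideanSpace ℝ (Fin F))
    (hdef : ∀ i, hhat i = ∑ k ∈ N i ∪ {i}, α i k • h k)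
    (h' : V → EuclideanSpace ℝ (Fin F))
    (hh' : ∀ i, h' i = fun f => σ (hhat i f))
    (i j : V) (hii : i ∉ N i) (hjj : j ∉ N j) (hij : i ∉ N j) (hji : j ∉ N i)
    (hN : N i = N j) (hα : ∀ c ∈ N i, α i c = α j c) :
    ‖h' i - h' j‖ ≤ ‖α i i • h i - α j j • h j‖ :=
  gnn_common_neighbors_feature_smoothness_general N α h σ hσ hhat hdef h' hh' i j hii hji hN hα
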